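/- arXiv:2106.11382 — 2 statements merged into one kernel-verified Lean document; each statement's English description precedes it below -/
import Mathlib

section
/- Let R be a nonzero ring whose only idempotents are 0 and 1, and let f : R → S be a ring homomorphism into a finite ring S such that every element of ker f is nilpotent. If α, β ∈ R commute with each other and satisfy α + β = 1, then α is a unit of R or β is a unit of R. -/
/-!
Some power `α ^ m` (`m > 0`) maps to an idempotent of the finite ring `S`. Idempotents lift
modulo the nil ideal `ker f`, and the only idempotents of `R` are `0` and `1`, so `α ^ m` or
`1 - α ^ m` lies in `ker f` and is nilpotent. In the first case `α` is nilpotent and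
`β = 1 - α` is a unit; in the second `α ^ m`, hence `α`, is a unit.
-/

theorem pow_add_mul_eq_pow_of_pow_eq {M : Type*} [Monoid M] {a : M} {i d : ℕ}
    (h : a ^ (i + d) = a ^ i) {n : ℕ} (hn : i ≤ n) (k : ℕ) : a ^ (n + k * d) = a ^ n := by
  obtain ⟨t, rfl⟩ := Nat.exists_eq_add_of_le hn
  induction k with
  | zero => simp
  | succ k ih =>
    calc a ^ (i + t + (k + 1) * d) = a ^ (i + d) * a ^ (t + k * d) := by rw [← pow_add]; ring_nf
      _ = a ^ (i + t + k * d) := by rw [h, ← pow_add, add_assoc]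
      _ = a ^ (i + t) := ih

theorem exists_isIdempotentElem_pow_of_finite {M : Type*} [Monoid M] [Finite M] (a : M) :
    ∃ n, 0 < n ∧ IsIdempotentElem (a ^ n) := by
  obtain ⟨i, j, hij, heq⟩ := Finite.exists_ne_map_eq_of_infinite (a ^ · : ℕ → M)
  wlog hlt : i < j generalizing i j
  · exact this j i hij.symm heq.symm (hij.lt_or_gt.resolve_left hlt)
  obtain ⟨d, rfl⟩ := Nat.exists_eq_add_of_lt hlt
  have hper : a ^ (i + (d + 1)) = a ^ i := heq.symm
  -- `(i + 1) * (d + 1)` is a multiple of the period `d + 1` beyond the preperiod `i`.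
  refine ⟨(i + 1) * (d + 1), by positivity, ?_⟩
  rw [IsIdempotentElem, ← pow_add]
  exact pow_add_mul_eq_pow_of_pow_eq hper (by nlinarith) (i + 1)

section NilKernel

variable {R S : Type*} [Ring R] [Ring S] {f : R →+* S}

theorem isNilpotent_or_isNilpotent_one_sub_of_isIdempotentElem_map
    (hid : ∀ e : R, IsIdempotentElem e → e = 0 ∨ e = 1)
    (hker : ∀ x ∈ RingHom.ker f, IsNilpotent x) {x : R} (hx : IsIdempotentElem (f x)) :
    IsNilpotent x ∨ IsNilpotent (1 - x) := by
  obtain ⟨e, he, hfe⟩ := exists_isIdempotentElem_eq_of_ker_isNilpotent f hker (f x) ⟨x, rfl⟩ hx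
  rcases hid e he with rfl | rfl
  · exact .inl <| hker x <| by rw [RingHom.mem_ker, ← hfe, map_zero]
  · exact .inr <| hker _ <| by rw [RingHom.mem_ker, map_sub, ← hfe, sub_self]

theorem isUnit_or_isUnit_one_sub_of_ker_isNilpotent [Finite S]
    (hid : ∀ e : R, IsIdempotentElem e → e = 0 ∨ e = 1)
    (hker : ∀ x ∈ RingHom.ker f, IsNilpotent x) (a : R) :
    IsUnit a ∨ IsUnit (1 - a) := by
  obtain ⟨m, hm, hidem⟩ := exists_isIdempotentElem_pow_of_finite (f a)
  rw [← map_pow] at hidem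
  rcases isNilpotent_or_isNilpotent_one_sub_of_isIdempotentElem_map hid hker hidem with h | h
  · exact .inr (IsNilpotent.of_pow h).isUnit_one_sub
  · have hunit : IsUnit (a ^ m) := by simpa using h.isUnit_one_sub
    exact .inl ((isUnit_pow_iff hm.ne').mp hunit)

end NilKernel

theorem stmt_3_general {R S : Type*} [Ring R] [Ring S] [Finite S]
    (hid : ∀ e : R, e * e = e → e = 0 ∨ e = 1)
    (f : R →+* S) (hker : ∀ x : R, f x = 0 → IsNilpotent x)
    (α β : R) (hsum : α + β = 1) :
    IsUnit α ∨ IsUnit β := by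
  rw [eq_sub_of_add_eq' hsum]
  exact isUnit_or_isUnit_one_sub_of_ker_isNilpotent (f := f) hid
    (fun x hx => hker x (RingHom.mem_ker.mp hx)) α

theorem stmt_3 {R S : Type*} [Ring R] [Nontrivial R] [Ring S] [Finite S]
    (hid : ∀ e : R, e * e = e → e = 0 ∨ e = 1)
    (f : R →+* S) (hker : ∀ x : R, f x = 0 → IsNilpotent x)
    (α β : R) (hcomm : α * β = β * α) (hsum : α + β = 1) :
    IsUnit α ∨ IsUnit β :=
  stmt_3_general hid f hker α β hsum
end

section
/- Let R be a commutative ring and S : R → R[[t]] a ring homomorphism such that for every x ∈ R the constant term of S(x) is x. Let e, u ∈ R with e·u = 0. Then for every n ≥ 0, the coefficient of t^n in S(e) is annihilated by u^{n+1}. -/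
open Finset PowerSeries

/-- In `coeff n (f * g) = 0`, by induction every term except `coeff n f * constantCoeff g` dies
after multiplying by `constantCoeff g ^ n`. -/
theorem PowerSeries.coeff_mul_constantCoeff_pow_succ_eq_zero {R : Type*} [CommRing R]
    {f g : PowerSeries R} (hfg : f * g = 0) (n : ℕ) :
    coeff n f * constantCoeff g ^ (n + 1) = 0 := by
  induction n using Nat.strong_induction_on with
  | _ n ih =>
  set u := constantCoeff g
  have hlower : ∀ k ∈ range n, coeff k f * coeff (n - k) g * u ^ n = 0 := by
    intro k hk
    have hkn : k + 1 ≤ n := mem_range.1 hk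
    calc coeff k f * coeff (n - k) g * u ^ n
        = coeff k f * u ^ (k + 1) * (coeff (n - k) g * u ^ (n - (k + 1))) := by
          rw [← pow_mul_pow_sub u hkn]
          ring
      _ = 0 := by rw [ih k hkn, zero_mul]
  have hsum : ∑ k ∈ range (n + 1), coeff k f * coeff (n - k) g = 0 := by
    rw [← Nat.sum_antidiagonal_eq_sum_range_succ (fun i j ↦ coeff i f * coeff j g), ← coeff_mul,
      hfg, map_zero]
  calc coeff n f * u ^ (n + 1)
      = (∑ k ∈ range (n + 1), coeff k f * coeff (n - k) g) * u ^ n := by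
        rw [sum_range_succ, add_mul, sum_mul, sum_eq_zero hlower, Nat.sub_self,
          coeff_zero_eq_constantCoeff, zero_add, pow_succ]
        ring
    _ = 0 := by rw [hsum, zero_mul]

theorem stmt_14 {R : Type*} [CommRing R] (S : R →+* PowerSeries R)
    (hS : ∀ x : R, PowerSeries.constantCoeff (S x) = x)
    (e u : R) (h : e * u = 0) :
    ∀ n : ℕ, (PowerSeries.coeff n (S e)) * u ^ (n + 1) = 0 := by
  intro n
  have hSeu : S e * S u = 0 := by rw [← map_mul, h, map_zero]
  simpa only [hS u] using coeff_mul_constantCoeff_pow_succ_eq_zero hSeu n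
end
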